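/- Let $M_{p,n}$ be a $p \times n$ complex matrix with last row $Y^* $ (so $M_{p,n} = \begin{pmatrix} M_{p-1,n} \\ Y^* \end{pmatrix}$ with $Y \in \mathbb{C}^n$), and suppose no singular value of $M_{p-1,n}$ equals $\sigma_i(M_{p,n})$. Then $\sum_{j=1}^{\min(p-1,n)} \frac{\sigma_j(M_{p-1,n})^2\,|u_j(M_{p-1,n})^* Y|^2}{\sigma_j(M_{p-1,n})^2 - \sigma_i(M_{p,n})^2} = \|Y\|^2 - \sigma_i(M_{p,n})^2$, where $u_j(M_{p-1,n}) \in \mathbb{C}^n$ is an orthonormal system of right singular vectors of $M_{p-1,n}$ corresponding to its non-trivial singular values. -/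

import Mathlib

open Matrix

/-- The singular values of a `p × m` complex matrix, arranged in increasing order:
the square roots of the eigenvalues of `A * Aᴴ`. -/
noncomputable def singVals {p m : ℕ} (A : Matrix (Fin p) (Fin m) ℂ) : Fin p → ℝ :=
  fun i =>
    Real.sqrt ((Matrix.isHermitian_mul_conjTranspose_self A).eigenvalues
      (Tuple.sort ((Matrix.isHermitian_mul_conjTranspose_self A).eigenvalues) i))

/-!
Write `M * Mᴴ` in block form `[[M' * M'ᴴ, M' Y], [(M' Y)ᴴ, ‖Y‖²]]` and let `(v, t)` be an
eigenvector for `λ = σᵢ(M)²`. As `λ` is not an eigenvalue of `M' * M'ᴴ`, `t ≠ 0`. Pairing the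
first block equation with `M' uⱼ` gives `(σⱼ² - λ) ⟪M' uⱼ, v⟫ = -t σⱼ² ⟪uⱼ, Y⟫`, and substituting
this into the second block equation yields the identity, provided `M' Y = ∑ⱼ ⟪uⱼ, Y⟫ M' uⱼ`.
That holds because `M'` vanishes on the orthogonal complement of the `uⱼ`: either they span `ℂⁿ`
(`n < p`), or they carry all the singular values of `M'`, and then, with `P = ∑ⱼ uⱼ uⱼᴴ`,
`‖M' (1 - P)‖²_F = tr (M'ᴴ M') - ∑ⱼ σⱼ² = 0`.
-/

namespace Matrix

variable {𝕜 : Type*} [RCLike 𝕜] {m n ι : Type*} [Fintype m] [Fintype n] [Fintype ι]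

lemma IsHermitian.mem_range_eigenvalues_of_mulVec_eq_smul [DecidableEq n] {A : Matrix n n 𝕜}
    (hA : A.IsHermitian) {μ : ℝ} {x : n → 𝕜} (hx₀ : x ≠ 0) (hx : A *ᵥ x = (μ : 𝕜) • x) :
    μ ∈ Set.range hA.eigenvalues := by
  have : Module.End.HasEigenvalue (toLin' A) (μ : 𝕜) :=
    Module.End.hasEigenvalue_of_hasEigenvector
      (Module.End.hasEigenvector_iff.2 ⟨by simpa [Module.End.mem_eigenspace_iff] using hx, hx₀⟩)
  rw [← hA.spectrum_real_eq_range_eigenvalues, ← spectrum.algebraMap_mem_iff 𝕜,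
    ← spectrum_toLin']
  exact this.mem_spectrum

open scoped ComplexOrder in
lemma mul_mul_conjTranspose_eq_self_of_trace_eq [DecidableEq n] [DecidableEq ι] {A : Matrix m n 𝕜}
    {U : Matrix n ι 𝕜} (hU : Uᴴ * U = 1) {μ : ι → 𝕜} (hAU : Aᴴ * A * U = U * diagonal μ)
    (htr : (Aᴴ * A).trace = ∑ j, μ j) : A * (U * Uᴴ) = A := by
  set Q := 1 - U * Uᴴ
  have hQQ : Q * Q = Q := by
    simp only [Q, Matrix.sub_mul, Matrix.mul_sub, Matrix.one_mul, Matrix.mul_one,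
      Matrix.mul_assoc, ← Matrix.mul_assoc Uᴴ, hU]
    abel
  have hQH : Qᴴ = Q := by simp [Q, conjTranspose_mul]
  have htrP : (Aᴴ * A * (U * Uᴴ)).trace = ∑ j, μ j := by
    rw [← Matrix.mul_assoc, hAU, Matrix.mul_assoc, trace_mul_comm, Matrix.mul_assoc, hU,
      Matrix.mul_one, trace_diagonal]
  have hres : ((A * Q)ᴴ * (A * Q)).trace = 0 := by
    rw [conjTranspose_mul, hQH, Matrix.mul_assoc, trace_mul_comm, ← Matrix.mul_assoc,
      Matrix.mul_assoc _ Q, hQQ, Matrix.mul_sub, Matrix.mul_one, trace_sub,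
      htrP, htr, sub_self]
  simpa [Q, Matrix.mul_sub, sub_eq_zero, eq_comm] using
    trace_conjTranspose_mul_self_eq_zero_iff.1 hres

theorem sum_mul_norm_sq_div_sub_eq [DecidableEq ι] {A : Matrix m n 𝕜} {U : Matrix n ι 𝕜}
    {μ : ι → ℝ} (hproj : A * (U * Uᴴ) = A)
    (hAU : Aᴴ * A * U = U * diagonal (fun j => (μ j : 𝕜)))
    {Y : n → 𝕜} {lam : ℝ} {v : m → 𝕜} {t : 𝕜} (hμ : ∀ j, μ j ≠ lam) (ht : t ≠ 0)
    (h₁ : A *ᵥ (Aᴴ *ᵥ v + t • Y) = (lam : 𝕜) • v)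
    (h₂ : star Y ⬝ᵥ (Aᴴ *ᵥ v + t • Y) = lam * t) :
    ∑ j, μ j * ‖(Uᴴ *ᵥ Y) j‖ ^ 2 / (μ j - lam) = ∑ k, ‖Y k‖ ^ 2 - lam := by
  set c := Uᴴ *ᵥ Y
  set d := Uᴴ *ᵥ Aᴴ *ᵥ v
  have hUA : Uᴴ * (Aᴴ * A) = diagonal (fun j => (μ j : 𝕜)) * Uᴴ := by
    simpa [conjTranspose_mul, Matrix.mul_assoc, Pi.star_def, RCLike.star_def] using
      congrArg conjTranspose hAU
  have hUAA : ∀ x, Uᴴ *ᵥ Aᴴ *ᵥ A *ᵥ x = diagonal (fun j => (μ j : 𝕜)) *ᵥ Uᴴ *ᵥ x := fun x => by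
    simp only [mulVec_mulVec, hUA]
  have hd : ∀ j, (μ j : 𝕜) * (d j + t * c j) = lam * d j := fun j => by
    have := congrFun (congrArg (Uᴴ *ᵥ Aᴴ *ᵥ ·) h₁) j
    simp only [hUAA, mulVec_add, mulVec_smul, mulVec_diagonal, Pi.add_apply, Pi.smul_apply,
      smul_eq_mul] at this
    linear_combination this
  have hcd : star Y ⬝ᵥ Aᴴ *ᵥ v = star c ⬝ᵥ d := by
    conv_lhs => rw [← hproj]
    rw [conjTranspose_mul, conjTranspose_mul, conjTranspose_conjTranspose, ← mulVec_mulVec,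
      ← mulVec_mulVec, dotProduct_mulVec, star_mulVec, conjTranspose_conjTranspose]
  have hlam : ∀ j, (lam : 𝕜) - μ j ≠ 0 := fun j h =>
    hμ j (by exact_mod_cast (sub_eq_zero.1 h).symm)
  set S := ∑ j, (μ j : 𝕜) * (star (c j) * c j) / (lam - μ j)
  have hsum : star c ⬝ᵥ d = t * S := by
    rw [Finset.mul_sum]
    refine Finset.sum_congr rfl fun j _ => ?_
    rw [Pi.star_apply, ← mul_div_assoc, eq_div_iff (hlam j)]
    linear_combination (-star (c j)) * hd j
  have hS : S = lam - star Y ⬝ᵥ Y := by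
    rw [dotProduct_add, dotProduct_smul, hcd, hsum, smul_eq_mul] at h₂
    exact mul_left_cancel₀ ht (by linear_combination h₂)
  have hscalar : ∑ j, (μ j : 𝕜) * (star (c j) * c j) / (μ j - lam) = star Y ⬝ᵥ Y - lam := by
    calc _ = -S := by
          rw [← Finset.sum_neg_distrib]
          exact Finset.sum_congr rfl fun j _ => by rw [← div_neg, neg_sub]
      _ = _ := by rw [hS]; ring
  apply RCLike.ofReal_injective (K := 𝕜)
  push_cast
  simpa [RCLike.star_def, RCLike.conj_mul, dotProduct] using hscalar

end Matrix

section Rows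

variable {𝕜 : Type*} [RCLike 𝕜] {n : Type*} {p : ℕ} {M' : Matrix (Fin p) n 𝕜}
  {Y : n → 𝕜} {M : Matrix (Fin (p + 1)) n 𝕜}

lemma conjTranspose_mulVec_of_rows (hMrow : ∀ i j, M (Fin.castSucc i) j = M' i j)
    (hMY : ∀ j, M (Fin.last p) j = star (Y j)) (v : Fin (p + 1) → 𝕜) :
    Mᴴ *ᵥ v = M'ᴴ *ᵥ (v ∘ Fin.castSucc) + v (Fin.last p) • Y := by
  ext k
  simp [mulVec, dotProduct, Fin.sum_univ_castSucc, conjTranspose_apply, hMrow, hMY, mul_comm]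

lemma eigen_equations_of_rows [Fintype n] (hMrow : ∀ i j, M (Fin.castSucc i) j = M' i j)
    (hMY : ∀ j, M (Fin.last p) j = star (Y j)) {v : Fin (p + 1) → 𝕜} {c : 𝕜}
    (hv : (M * Mᴴ) *ᵥ v = c • v) :
    M' *ᵥ (M'ᴴ *ᵥ (v ∘ Fin.castSucc) + v (Fin.last p) • Y) = c • (v ∘ Fin.castSucc) ∧
      star Y ⬝ᵥ (M'ᴴ *ᵥ (v ∘ Fin.castSucc) + v (Fin.last p) • Y) = c * v (Fin.last p) := by
  rw [← mulVec_mulVec, conjTranspose_mulVec_of_rows hMrow hMY] at hv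
  refine ⟨funext fun a => ?_, ?_⟩
  · simpa [mulVec, hMrow] using congrFun hv a.castSucc
  · simpa [mulVec, hMY, Pi.star_def] using congrFun hv (Fin.last p)

lemma last_ne_zero_of_rows [Fintype n] (hMrow : ∀ i j, M (Fin.castSucc i) j = M' i j)
    (hMY : ∀ j, M (Fin.last p) j = star (Y j)) {v : Fin (p + 1) → 𝕜} {c : 𝕜}
    (hv₀ : v ≠ 0) (hv : (M * Mᴴ) *ᵥ v = c • v)
    (hc : ∀ x, (M' * M'ᴴ) *ᵥ x = c • x → x = 0) : v (Fin.last p) ≠ 0 := by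
  intro hlast
  have h₁ := (eigen_equations_of_rows hMrow hMY hv).1
  rw [hlast, zero_smul, add_zero, mulVec_mulVec] at h₁
  have hinit := congrFun (hc _ h₁)
  exact hv₀ (funext fun a => Fin.lastCases hlast (fun b => hinit b) a)

end Rows

section SingVals

variable {p q : ℕ} (A : Matrix (Fin p) (Fin q) ℂ)

lemma singVals_nonneg (a : Fin p) : 0 ≤ singVals A a := Real.sqrt_nonneg _

lemma sq_singVals (a : Fin p) :
    singVals A a ^ 2 = (isHermitian_mul_conjTranspose_self A).eigenvalues
      (Tuple.sort (isHermitian_mul_conjTranspose_self A).eigenvalues a) :=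
  Real.sq_sqrt (eigenvalues_self_mul_conjTranspose_nonneg A _)

lemma exists_mulVec_eq_singVals_sq_smul (a : Fin p) :
    ∃ v ≠ 0, (A * Aᴴ) *ᵥ v = ((singVals A a ^ 2 : ℝ) : ℂ) • v := by
  set hA := isHermitian_mul_conjTranspose_self A
  refine ⟨hA.eigenvectorBasis (Tuple.sort hA.eigenvalues a), ?_, ?_⟩
  · exact (WithLp.ofLp_eq_zero 2).ne.2 (hA.eigenvectorBasis.orthonormal.ne_zero _)
  · rw [hA.mulVec_eigenvectorBasis, sq_singVals]
    rfl

lemma eq_zero_of_mulVec_eq_smul_of_forall_singVals_sq_ne {μ : ℝ} (hμ : ∀ a, singVals A a ^ 2 ≠ μ)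
    {x : Fin p → ℂ} (hx : (A * Aᴴ) *ᵥ x = (μ : ℂ) • x) : x = 0 := by
  set hA := isHermitian_mul_conjTranspose_self A
  by_contra hx₀
  obtain ⟨k, hk⟩ := hA.mem_range_eigenvalues_of_mulVec_eq_smul hx₀ hx
  exact hμ ((Tuple.sort hA.eigenvalues).symm k) (by rw [sq_singVals, Equiv.apply_symm_apply, hk])

lemma trace_conjTranspose_mul_self_eq_sum_sq_singVals :
    (Aᴴ * A).trace = ∑ a, ((singVals A a ^ 2 : ℝ) : ℂ) := by
  rw [trace_mul_comm, (isHermitian_mul_conjTranspose_self A).trace_eq_sum_eigenvalues,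
    ← Equiv.sum_comp (Tuple.sort (isHermitian_mul_conjTranspose_self A).eigenvalues)]
  simp only [sq_singVals]
  rfl

end SingVals

/-- The interlacing identity for singular values of `M = (M' ; Y*)` with last row `Y*`. -/
theorem interlacing_identity_singular_values_row
    {p n : ℕ}
    (M' : Matrix (Fin p) (Fin n) ℂ) (Y : Fin n → ℂ)
    (M : Matrix (Fin (p + 1)) (Fin n) ℂ)
    (hMrow : ∀ (i : Fin p) (j : Fin n), M (Fin.castSucc i) j = M' i j)
    (hMY : ∀ j : Fin n, M (Fin.last p) j = star (Y j))
    (i : Fin (p + 1))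
    (u : Fin (min p n) → EuclideanSpace ℂ (Fin n)) (hu : Orthonormal ℂ u)
    (hright : ∀ j : Fin (min p n),
      (M'ᴴ * M') *ᵥ (u j : Fin n → ℂ)
        = (((singVals M' (Fin.castLE (min_le_left p n) j)) ^ 2 : ℝ) : ℂ) • (u j : Fin n → ℂ))
    (hsep : ∀ j : Fin p, singVals M' j ≠ singVals M i) :
    ∑ j : Fin (min p n),
        (singVals M' (Fin.castLE (min_le_left p n) j)) ^ 2 *
            ‖star (u j : Fin n → ℂ) ⬝ᵥ Y‖ ^ 2 /
          ((singVals M' (Fin.castLE (min_le_left p n) j)) ^ 2 - (singVals M i) ^ 2) =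
      (∑ k : Fin n, ‖Y k‖ ^ 2) - (singVals M i) ^ 2 := by
  set μ : Fin (min p n) → ℝ := fun j => singVals M' (Fin.castLE (min_le_left p n) j) ^ 2
  set U : Matrix (Fin n) (Fin (min p n)) ℂ := of fun k j => u j k
  have hUU : Uᴴ * U = 1 :=
    (gram_eq_conjTranspose_mul (EuclideanSpace.basisFun (Fin n) ℂ) u).symm.trans
      (gram_eq_one_iff_orthonormal.2 hu)
  have hAU : M'ᴴ * M' * U = U * diagonal (fun j => (μ j : ℂ)) := by
    ext k j
    rw [mul_diagonal]
    simpa [U, μ, mul_apply, mulVec, dotProduct, mul_comm] using congrFun (hright j) k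
  have hproj : M' * (U * Uᴴ) = M' := by
    rcases le_or_gt p n with hpn | hnp
    · refine mul_mul_conjTranspose_eq_self_of_trace_eq hUU hAU ?_
      rw [trace_conjTranspose_mul_self_eq_sum_sq_singVals]
      exact (Fintype.sum_equiv (finCongr (min_eq_left hpn)) _ _ fun j => rfl).symm
    · rw [(mul_eq_one_comm_of_equiv (finCongr (min_eq_right hnp.le))).1 hUU, Matrix.mul_one]
  have hsq : ∀ a, singVals M' a ^ 2 ≠ singVals M i ^ 2 := fun a h =>
    hsep a ((pow_left_inj₀ (singVals_nonneg _ _) (singVals_nonneg _ _) two_ne_zero).1 h)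
  obtain ⟨v, hv₀, hv⟩ := exists_mulVec_eq_singVals_sq_smul M i
  obtain ⟨h₁, h₂⟩ := eigen_equations_of_rows hMrow hMY hv
  simpa [U, mulVec, dotProduct, conjTranspose_apply, mul_comm] using
    sum_mul_norm_sq_div_sub_eq (μ := μ) hproj hAU (fun j => hsq _)
      (last_ne_zero_of_rows hMrow hMY hv₀ hv
        fun _ => eq_zero_of_mulVec_eq_smul_of_forall_singVals_sq_ne M' hsq) h₁ h₂
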